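/- Let A be a Banach lattice algebra and let (p_λ)_{λ∈Λ} be a family of elements of A, each of which is both a left band projection and a right band projection, such that p_α p_β = 0 for α ≠ β and p_α p_α = p_α for all α. Then for every finite nonempty subset Φ ⊆ Λ × Λ and every x ∈ A with x ≥ 0, the supremum in A of the finite set {p_α x p_β : (α,β) ∈ Φ} equals the sum Σ_{(α,β)∈Φ} p_α x p_β. -/

import Mathlib

/-!
Left multiplication by `p_α` is a band projection that fixes every `p_α x p_β` and kills every
`p_γ y p_δ` with `γ ≠ α`; symmetrically for right multiplication by `p_β`. A positive element fixed
by a band projection is disjoint from a positive element it kills, so the terms `p_α x p_β` for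
distinct pairs `(α, β)` are pairwise disjoint. In a lattice-ordered group `a ⊓ b + a ⊔ b = a + b`,
hence the supremum of finitely many pairwise disjoint elements is their sum.
-/

section LatticeOrderedGroup

variable {A : Type*} [Lattice A] [AddCommGroup A] [AddLeftMono A]

theorem inf_eq_zero_of_map_eq_self_of_map_eq_zero (P : A →+ A)
    (hP_nonneg : ∀ u, 0 ≤ u → 0 ≤ P u) (hP_le : ∀ u, 0 ≤ u → P u ≤ u)
    {y y' : A} (hy : 0 ≤ y) (hy' : 0 ≤ y') (hPy : P y = y) (hPy' : P y' = 0) :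
    y ⊓ y' = 0 := by
  have hP_le_zero : P (y ⊓ y') ≤ 0 := by
    have := hP_nonneg _ (sub_nonneg.2 (inf_le_right : y ⊓ y' ≤ y'))
    rwa [map_sub, hPy', zero_sub, neg_nonneg] at this
  have hle_P : y ⊓ y' ≤ P (y ⊓ y') := by
    have := hP_le _ (sub_nonneg.2 (inf_le_left : y ⊓ y' ≤ y))
    rwa [map_sub, hPy, sub_le_sub_iff_left] at this
  exact le_antisymm (hle_P.trans hP_le_zero) (le_inf hy hy')

theorem Finset.sup'_eq_sum_of_pairwise_inf_eq_zero {ι : Type*} {s : Finset ι} (hs : s.Nonempty)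
    {f : ι → A} (hf : (s : Set ι).Pairwise fun i j => f i ⊓ f j = 0) :
    s.sup' hs f = ∑ i ∈ s, f i := by
  let := AddCommGroup.toDistribLattice A
  induction hs using Finset.Nonempty.cons_induction with
  | singleton a => simp
  | cons a s ha hs ih =>
    rw [Finset.coe_cons, Set.pairwise_insert] at hf
    have hsum := ih hf.1
    have hinf : f a ⊓ ∑ i ∈ s, f i = 0 := by
      rw [← hsum, Finset.sup'_inf_distrib_left]
      refine (Finset.sup'_congr hs rfl fun i hi => ?_).trans (Finset.sup'_const hs 0)
      exact (hf.2 i hi fun h => ha (h ▸ hi)).1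
    rw [Finset.sup'_cons hs, Finset.sum_cons, hsum, ← inf_add_sup, hinf, zero_add]

end LatticeOrderedGroup

section Sandwich

variable {R A : Type*} [CommSemiring R] [AddCommGroup A] [Lattice A] [AddLeftMono A] [Module R A]
  (mul : A →ₗ[R] A →ₗ[R] A)
  (mul_assoc : ∀ a b c : A, mul (mul a b) c = mul a (mul b c))
  (mul_nonneg : ∀ a b : A, 0 ≤ a → 0 ≤ b → 0 ≤ mul a b)
include mul_assoc mul_nonneg

theorem mul_inf_mul_eq_zero_of_mul_eq_zero {e e' y y' : A} (he : 0 ≤ e)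
    (he_le : ∀ u, 0 ≤ u → mul e u ≤ u) (hee : mul e e = e) (hee' : mul e e' = 0)
    (hy : 0 ≤ mul e y) (hy' : 0 ≤ mul e' y') :
    mul e y ⊓ mul e' y' = 0 :=
  inf_eq_zero_of_map_eq_self_of_map_eq_zero (mul e).toAddMonoidHom
    (fun u hu => mul_nonneg e u he hu) he_le hy hy'
    (by simp [← mul_assoc, hee]) (by simp [← mul_assoc, hee'])

-- The left-handed statement for the opposite multiplication `mul.flip`.
theorem mul_inf_mul_eq_zero_of_mul_eq_zero_right {e e' y y' : A} (he : 0 ≤ e)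
    (he_le : ∀ u, 0 ≤ u → mul u e ≤ u) (hee : mul e e = e) (he'e : mul e' e = 0)
    (hy : 0 ≤ mul y e) (hy' : 0 ≤ mul y' e') :
    mul y e ⊓ mul y' e' = 0 :=
  mul_inf_mul_eq_zero_of_mul_eq_zero mul.flip (fun a b c => (mul_assoc c b a).symm)
    (fun a b ha hb => mul_nonneg b a hb ha) he he_le hee he'e hy hy'

end Sandwich

theorem finite_sup_of_disjoint_band_projections_eq_sum
    {A : Type*} [NormedAddCommGroup A] [Lattice A] [IsOrderedAddMonoid A]
    [NormedSpace ℝ A]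
    (mul : A →ₗ[ℝ] A →ₗ[ℝ] A)
    (mul_assoc : ∀ a b c : A, mul (mul a b) c = mul a (mul b c))
    (mul_nonneg : ∀ a b : A, 0 ≤ a → 0 ≤ b → 0 ≤ mul a b)
    {Λ : Type*} (p : Λ → A)
    (hpos : ∀ l, 0 ≤ p l)
    (hL : ∀ l, ∀ x : A, 0 ≤ x → mul (p l) x ≤ x ∧ mul (mul (p l) (p l)) x = mul (p l) x)
    (hR : ∀ l, ∀ x : A, 0 ≤ x → mul x (p l) ≤ x ∧ mul x (mul (p l) (p l)) = mul x (p l))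
    (horth : ∀ a b : Λ, a ≠ b → mul (p a) (p b) = 0)
    (hidem : ∀ a : Λ, mul (p a) (p a) = p a)
    (Φ : Finset (Λ × Λ)) (hΦ : Φ.Nonempty)
    (x : A) (hx : 0 ≤ x) :
    Φ.sup' hΦ (fun q => mul (p q.1) (mul x (p q.2))) =
      ∑ q ∈ Φ, mul (p q.1) (mul x (p q.2)) := by
  have hterm_nonneg (q : Λ × Λ) : 0 ≤ mul (p q.1) (mul x (p q.2)) :=
    mul_nonneg _ _ (hpos q.1) (mul_nonneg _ _ hx (hpos q.2))
  refine Finset.sup'_eq_sum_of_pairwise_inf_eq_zero hΦ fun q _ r _ hqr => ?_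
  by_cases hfst : q.1 = r.1
  · have hsnd : q.2 ≠ r.2 := fun hsnd => hqr (Prod.ext hfst hsnd)
    have hterm_nonneg' (q : Λ × Λ) : 0 ≤ mul (mul (p q.1) x) (p q.2) :=
      mul_assoc _ _ _ ▸ hterm_nonneg q
    simp only [← mul_assoc]
    exact mul_inf_mul_eq_zero_of_mul_eq_zero_right mul mul_assoc mul_nonneg (hpos q.2)
      (fun u hu => (hR q.2 u hu).1) (hidem q.2) (horth r.2 q.2 (Ne.symm hsnd))
      (hterm_nonneg' q) (hterm_nonneg' r)
  · exact mul_inf_mul_eq_zero_of_mul_eq_zero mul mul_assoc mul_nonneg (hpos q.1)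
      (fun u hu => (hL q.1 u hu).1) (hidem q.1) (horth q.1 r.1 hfst)
      (hterm_nonneg q) (hterm_nonneg r)
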